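/- Let D be a division ring with central subfield K, let f, g ∈ D, and suppose g has an admissible linear system (e_1, A_g, v_g) of dimension n_g whose first column is e_1 (i.e., A_g = [[1, b', b],[0, B, b''],[0, c', c]]) with v_g = λ_g e_{n_g}, λ_g ∈ K, and f has an admissible linear system (e_1, A_f, v_f) with v_f = λ_f e_{n_f}, λ_f ∈ K. Then the system of dimension n_f + n_g − 1 with system matrix [[A_f, e_{n_f} λ_f b', e_{n_f} λ_f b],[0, B, b''],[0, c', c]], right-hand side [0; 0; λ_g], and u = [e_1 of size n_f, 0, 0] is an admissible linear system for f·g; in particular its system matrix is invertible. -/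

import Mathlib

/-!
Write `A_g = [[1, b'], [0, A₂₂]]`. Because the first column of `A_g` is `e_1`, so is the first
column of `A_g⁻¹`, hence `A₂₂` is invertible with inverse the lower-right block `B₂₂` of `A_g⁻¹`,
and the first row of `A_g⁻¹` is `[1, -b' B₂₂]`. The new system matrix is block upper triangular
with diagonal blocks `A_f` and `A₂₂`, so it is invertible with inverse
`[[A_f⁻¹, -A_f⁻¹ X B₂₂], [0, B₂₂]]`, where `X = e_{n_f} λ_f b'`. Since `f = (A_f⁻¹)_{1,n_f} λ_f`,
the first row of `A_f⁻¹ X` is `f b'`, and the first entry of the solution is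
`-f b' B₂₂ v = f (A_g⁻¹ v_g)_1 = f g`, using that `v_g` has first entry `0` (as `n_g ≥ 2`).
-/

namespace Matrix

variable {R : Type*} [Ring R]

theorem fromBlocks_zero₂₁_mul_eq_one {m n : Type*} [Fintype m] [Fintype n] [DecidableEq m]
    [DecidableEq n] {A A' : Matrix m m R} {D D' : Matrix n n R} (B : Matrix m n R)
    (hA : A * A' = 1) (hA' : A' * A = 1) (hD : D * D' = 1) (hD' : D' * D = 1) :
    fromBlocks A B 0 D * fromBlocks A' (-(A' * B * D')) 0 D' = 1 ∧
      fromBlocks A' (-(A' * B * D')) 0 D' * fromBlocks A B 0 D = 1 := by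
  constructor <;>
  simp [fromBlocks_multiply, ← fromBlocks_one, ← Matrix.mul_assoc, hA, hA', hD, hD',
    Matrix.mul_assoc _ D' D]

theorem mul_apply_of_single_row {m n o : Type*} [Fintype n] [DecidableEq n] (M : Matrix m n R)
    {N : Matrix n o R} {i₀ : n} {x : o → R} (hN : ∀ i j, N i j = if i = i₀ then x j else 0)
    (r : m) (j : o) : (M * N) r j = M r i₀ * x j := by
  simp [mul_apply, hN]

variable {n : ℕ} {A B : Matrix (Fin (n + 1)) (Fin (n + 1)) R}

theorem col_zero_of_mul_eq_one (hBA : B * A = 1) (hA : ∀ i, A i 0 = if i = 0 then 1 else 0)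
    (i : Fin (n + 1)) : B i 0 = if i = 0 then 1 else 0 := by
  simpa [mul_apply, hA, one_apply] using congr_fun₂ hBA i 0

theorem submatrix_succ_mul_eq_one (hAB : A * B = 1) (hA : ∀ i : Fin n, A i.succ 0 = 0) :
    A.submatrix Fin.succ Fin.succ * B.submatrix Fin.succ Fin.succ = 1 := by
  ext i j
  have h := congr_fun₂ hAB i.succ j.succ
  rw [mul_apply, Fin.sum_univ_succ, hA, zero_mul, zero_add] at h
  simpa [mul_apply, one_apply] using h

theorem apply_zero_succ_of_mul_eq_one (hAB : A * B = 1) (hA : A 0 0 = 1) (j : Fin n) :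
    B 0 j.succ = -∑ i : Fin n, A 0 i.succ * B i.succ j.succ := by
  have h := congr_fun₂ hAB 0 j.succ
  rw [mul_apply, Fin.sum_univ_succ, hA, one_mul, one_apply_ne (Fin.succ_ne_zero j).symm] at h
  exact eq_neg_of_add_eq_zero_left h

end Matrix

open Matrix

/-- Multiplication of type (*,1): if `g` has an ALS `(e_1, A_g, λ_g e_{n_g})` of
dimension `n_g = l+1` whose first column is `e_1`, and `f` has an ALS
`(e_1, A_f, λ_f e_{n_f})` of dimension `n_f = k+1`, then the system of dimension
`n_f + n_g − 1` with system matrix `[[A_f, e_{n_f} λ_f b', e_{n_f} λ_f b],[0, B, b''],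
[0, c', c]]` and right-hand side `[0; …; 0; λ_g]` is an admissible linear system
for `f·g`; in particular its system matrix is invertible. -/
theorem stmt12 {K D : Type*} [Field K] [DivisionRing D] [Algebra K D]
    {k l : ℕ} [NeZero l]
    (Af Bf : Matrix (Fin (k + 1)) (Fin (k + 1)) D)
    (hBf : Af * Bf = 1 ∧ Bf * Af = 1)
    (Ag Bg : Matrix (Fin (l + 1)) (Fin (l + 1)) D)
    (hBg : Ag * Bg = 1 ∧ Bg * Ag = 1)
    (lamf lamg : K)
    (vf : Matrix (Fin (k + 1)) (Fin 1) D)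
    (hvf : ∀ i, vf i 0 = if i = Fin.last k then algebraMap K D lamf else 0)
    (vg : Matrix (Fin (l + 1)) (Fin 1) D)
    (hvg : ∀ i, vg i 0 = if i = Fin.last l then algebraMap K D lamg else 0)
    (hAgcol : ∀ i, Ag i 0 = if i = 0 then (1 : D) else 0)
    (f g : D)
    (hf : f = (Bf * vf) 0 0) (hg : g = (Bg * vg) 0 0)
    (C : Matrix (Fin (k + 1) ⊕ Fin l) (Fin (k + 1) ⊕ Fin l) D)
    (hC : C = Matrix.fromBlocks
      Af
      (Matrix.of fun (i : Fin (k + 1)) (j : Fin l) =>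
        if i = Fin.last k then algebraMap K D lamf * Ag 0 j.succ else 0)
      0
      (Matrix.of fun i j : Fin l => Ag i.succ j.succ))
    (w : Matrix (Fin (k + 1) ⊕ Fin l) (Fin 1) D)
    (hw : w = Matrix.of (Sum.elim (fun (_ : Fin (k + 1)) (_ : Fin 1) => (0 : D))
      (fun i => vg i.succ))) :
    ∃ C' : Matrix (Fin (k + 1) ⊕ Fin l) (Fin (k + 1) ⊕ Fin l) D,
      C * C' = 1 ∧ C' * C = 1 ∧ (C' * w) (Sum.inl 0) 0 = f * g := by
  obtain ⟨hAfBf, hBfAf⟩ := hBf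
  obtain ⟨hAgBg, hBgAg⟩ := hBg
  set X : Matrix (Fin (k + 1)) (Fin l) D := of fun i j =>
    if i = Fin.last k then algebraMap K D lamf * Ag 0 j.succ else 0
  have hBgcol := col_zero_of_mul_eq_one hBgAg hAgcol
  obtain ⟨hCC', hC'C⟩ := fromBlocks_zero₂₁_mul_eq_one X hAfBf hBfAf
    (submatrix_succ_mul_eq_one hAgBg fun i => by simp [hAgcol])
    (submatrix_succ_mul_eq_one hBgAg fun i => by simp [hBgcol])
  refine ⟨_, hC ▸ hCC', hC ▸ hC'C, ?_⟩
  have hf' : f = Bf 0 (Fin.last k) * algebraMap K D lamf :=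
    hf.trans <| mul_apply_of_single_row Bf (i₀ := Fin.last k) (x := fun _ => algebraMap K D lamf)
      (fun i j => by rw [Fin.fin_one_eq_zero j, hvf]) 0 0
  have hg' : g = ∑ j : Fin l, Bg 0 j.succ * vg j.succ 0 := by
    rw [hg, mul_apply, Fin.sum_univ_succ, hvg, if_neg Fin.last_pos'.ne, mul_zero, zero_add]
  have hBfX : ∀ j, (Bf * X) 0 j = f * Ag 0 j.succ := fun j => by
    rw [mul_apply_of_single_row Bf (N := X) (x := fun j => algebraMap K D lamf * Ag 0 j.succ)
      (fun _ _ => rfl), hf', mul_assoc]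
  have hBfXB : ∀ j, (Bf * X * Bg.submatrix Fin.succ Fin.succ) 0 j = -(f * Bg 0 j.succ) := by
    intro j
    simp only [mul_apply (M := Bf * X), hBfX, submatrix_apply, mul_assoc, ← Finset.mul_sum,
      apply_zero_succ_of_mul_eq_one hAgBg (by simpa using hAgcol 0), neg_neg, mul_neg]
  rw [hw, mul_apply, Fintype.sum_sum_type]
  simp only [fromBlocks_apply₁₁, fromBlocks_apply₁₂, of_apply, Sum.elim_inl, Sum.elim_inr,
    mul_zero, Finset.sum_const_zero, zero_add, hg', Finset.mul_sum]
  exact Finset.sum_congr rfl fun j _ => by rw [Matrix.neg_apply, hBfXB, neg_neg, mul_assoc]
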